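/- arXiv:2009.00806 — 3 statements merged into one kernel-verified Lean document; each statement's English description precedes it below -/
import Mathlib

section
/- For a linear time-frequency channel that is diagonal, i.e., H_{n,m}[n',m'] = H[n,m] δ[n−n'] δ[m−m'], the induced delay-Doppler channel kernel h_{k,ℓ}[k',ℓ'] = ∑_{n,m} H[n,m] e^{−j2π(n(k−k')/N − m(ℓ−ℓ')/M)} depends only on the differences k−k' mod N and ℓ−ℓ' mod M, i.e., the delay-Doppler channel is a 2D circular convolution. -/
open Complex Finset

/-- For a diagonal (ICI/ISI-free) time-frequency channel, the induced delay-Doppler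
channel kernel depends only on the differences `k−k' mod N` and `ℓ−ℓ' mod M`:
it is a 2D circular convolution. -/
theorem diagonal_channel_is_circular_convolution (N M : ℕ) (hN : 0 < N) (hM : 0 < M)
    (H : ℕ → ℕ → ℂ) :
    ∃ g : ℤ → ℤ → ℂ, ∀ k ℓ k' ℓ' : ℤ,
      (∑ n ∈ Finset.range N, ∑ m ∈ Finset.range M,
        H n m * Complex.exp (-(2 * Real.pi * Complex.I) *
          ((n : ℂ) * ((k - k' : ℤ) : ℂ) / N - (m : ℂ) * ((ℓ - ℓ' : ℤ) : ℂ) / M))) =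
      g ((k - k') % (N : ℤ)) ((ℓ - ℓ') % (M : ℤ)) := by
  refine ⟨fun a b => ∑ n ∈ Finset.range N, ∑ m ∈ Finset.range M,
    H n m * Complex.exp (-(2 * Real.pi * Complex.I) *
      ((n : ℂ) * (a : ℂ) / N - (m : ℂ) * (b : ℂ) / M)), fun k ℓ k' ℓ' => ?_⟩
  have hNc : (N : ℂ) ≠ 0 := Nat.cast_ne_zero.2 hN.ne'
  have hMc : (M : ℂ) ≠ 0 := Nat.cast_ne_zero.2 hM.ne'
  refine Finset.sum_congr rfl fun n _ => Finset.sum_congr rfl fun m _ => ?_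
  congr 1
  set a : ℤ := k - k' with ha
  set b : ℤ := ℓ - ℓ' with hb
  have h1 : (a : ℂ) = (N : ℂ) * ((a / (N : ℤ) : ℤ) : ℂ) + ((a % (N : ℤ) : ℤ) : ℂ) := by
    exact_mod_cast congrArg (fun z : ℤ => (z : ℂ)) (Int.mul_ediv_add_emod a N).symm
  have h2 : (b : ℂ) = (M : ℂ) * ((b / (M : ℤ) : ℤ) : ℂ) + ((b % (M : ℤ) : ℤ) : ℂ) := by
    exact_mod_cast congrArg (fun z : ℤ => (z : ℂ)) (Int.mul_ediv_add_emod b M).symm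
  have hx : -(2 * (Real.pi : ℂ) * Complex.I) *
      ((n : ℂ) * (a : ℂ) / N - (m : ℂ) * (b : ℂ) / M) =
      -(2 * (Real.pi : ℂ) * Complex.I) *
      ((n : ℂ) * ((a % (N : ℤ) : ℤ) : ℂ) / N - (m : ℂ) * ((b % (M : ℤ) : ℤ) : ℂ) / M) +
      (((m : ℤ) * (b / (M : ℤ)) - (n : ℤ) * (a / (N : ℤ)) : ℤ) : ℂ) *
        (2 * (Real.pi : ℂ) * Complex.I) := by
    rw [h1, h2]
    push_cast
    field_simp
    ring
  rw [hx, Complex.exp_add, Complex.exp_int_mul_two_pi_mul_I, mul_one]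
end

section
/- Substituting a complex exponential input into a linear time-varying delay channel gives the computed Heisenberg-Wigner kernel: with transmit/receive pulses g_tx, g_rx ∈ L²(ℝ) and channel r(t) = ∑_{p,i} h_i e^{j2πν_i(t − pT_s)} P(pT_s − τ_i) s(t − pT_s), the time-frequency samples Y[n,m] = ∫ g_rx*(t'−nT) r(t') e^{−j2π(m−(M−1)/2)Δf(t'−nT)} dt' of the received signal satisfy Y[n,m] = ∑_{n',m'} H_{n,m}[n',m'] X[n',m'] with H_{n,m}[n',m'] = ∑_{p,i} h_i P(pT_s − τ_i) A_{g_rx,g_tx}((n−n')T − pT_s, (m−m')Δf − ν_i) · e^{jπ(M−1)Δf(pT_s − (n−n')T)} e^{j2πm'Δf((n−n')T − pT_s)} e^{j2πν_i(nT − pT_s)}, where A_{g_rx,g_tx}(t,f) = ∫ g_rx*(t'−t) g_tx(t') e^{−j2πf(t'−t)} dt'. -/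
open Complex Finset MeasureTheory


private lemma sum3_rotate {α : Type*} [AddCommMonoid α] (s t u : Finset ℕ) (g : ℕ → ℕ → ℕ → α) :
    (∑ p ∈ s, ∑ i ∈ t, ∑ k ∈ u, g p i k) = ∑ k ∈ u, ∑ p ∈ s, ∑ i ∈ t, g p i k :=
  calc (∑ p ∈ s, ∑ i ∈ t, ∑ k ∈ u, g p i k)
      = ∑ p ∈ s, ∑ k ∈ u, ∑ i ∈ t, g p i k :=
        Finset.sum_congr rfl fun p _ => Finset.sum_comm
    _ = ∑ k ∈ u, ∑ p ∈ s, ∑ i ∈ t, g p i k := Finset.sum_comm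

private lemma sum4_comm {α : Type*} [AddCommMonoid α] (P L N M : ℕ) (f : ℕ → ℕ → ℕ → ℕ → α) :
    (∑ p ∈ Finset.range P, ∑ i ∈ Finset.range L, ∑ n' ∈ Finset.range N,
        ∑ m' ∈ Finset.range M, f p i n' m')
      = ∑ n' ∈ Finset.range N, ∑ m' ∈ Finset.range M, ∑ p ∈ Finset.range P,
          ∑ i ∈ Finset.range L, f p i n' m' :=
  (sum3_rotate _ _ _ _).trans (Finset.sum_congr rfl fun n' _ => sum3_rotate _ _ _ _)

private lemma exp_shuffle (g1 g2 hh pp xx : ℂ) (a1 a2 a3 e1 e2 e3 e4 : ℂ)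
    (hE : a1 + a2 + a3 = e1 + e2 + e3 + e4) :
    g1 * (hh * Complex.exp a1 * pp * (xx * g2 * Complex.exp a2)) * Complex.exp a3
      = hh * pp * Complex.exp e1 * Complex.exp e2 * Complex.exp e3 * xx *
          (g1 * g2 * Complex.exp e4) := by
  have l : Complex.exp a1 * Complex.exp a2 * Complex.exp a3
      = Complex.exp e1 * Complex.exp e2 * Complex.exp e3 * Complex.exp e4 := by
    rw [← Complex.exp_add, ← Complex.exp_add, hE, Complex.exp_add, Complex.exp_add,
      Complex.exp_add]
  calc g1 * (hh * Complex.exp a1 * pp * (xx * g2 * Complex.exp a2)) * Complex.exp a3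
      = (g1 * g2 * hh * pp * xx) * (Complex.exp a1 * Complex.exp a2 * Complex.exp a3) := by ring
    _ = (g1 * g2 * hh * pp * xx) *
          (Complex.exp e1 * Complex.exp e2 * Complex.exp e3 * Complex.exp e4) := by rw [l]
    _ = _ := by ring

private lemma integral_sum4 {P L N M : ℕ} (f : ℕ → ℕ → ℕ → ℕ → ℝ → ℂ)
    (hf : ∀ p i n' m', MeasureTheory.Integrable (f p i n' m')) :
    (∫ t : ℝ, ∑ p ∈ Finset.range P, ∑ i ∈ Finset.range L, ∑ n' ∈ Finset.range N,
        ∑ m' ∈ Finset.range M, f p i n' m' t)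
      = ∑ p ∈ Finset.range P, ∑ i ∈ Finset.range L, ∑ n' ∈ Finset.range N,
          ∑ m' ∈ Finset.range M, ∫ t : ℝ, f p i n' m' t := by
  rw [MeasureTheory.integral_finset_sum _ (fun p _ => integrable_finset_sum _ (fun i _ =>
    integrable_finset_sum _ (fun n' _ => integrable_finset_sum _ (fun m' _ => hf p i n' m'))))]
  refine Finset.sum_congr rfl fun p _ => ?_
  rw [MeasureTheory.integral_finset_sum _ (fun i _ => integrable_finset_sum _ (fun n' _ =>
    integrable_finset_sum _ (fun m' _ => hf p i n' m')))]
  refine Finset.sum_congr rfl fun i _ => ?_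
  rw [MeasureTheory.integral_finset_sum _ (fun n' _ => integrable_finset_sum _ (fun m' _ =>
    hf p i n' m'))]
  exact Finset.sum_congr rfl fun n' _ =>
    MeasureTheory.integral_finset_sum _ (fun m' _ => hf p i n' m')

set_option maxHeartbeats 2000000 in
/-- Theorem 1 of the paper (noiseless version): the time-frequency samples of the
received signal through a linear time-varying delay-Doppler channel equal the
Heisenberg–Wigner kernel acting on the transmitted time-frequency symbols. -/
theorem heisenberg_wigner_kernel
    (N M P L : ℕ) (hN : 0 < N) (hM : 0 < M) (hP : 0 < P) (hL : 0 < L)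
    (T Ts Δf : ℝ) (hT : 0 < T) (hTs : 0 < Ts) (hΔf : Δf = 1 / T)
    (h : ℕ → ℂ) (τ ν : ℕ → ℝ) (Pfilt : ℝ → ℝ)
    (gtx grx : ℝ → ℂ)
    (hgtx_cont : Continuous gtx) (hgtx_supp : HasCompactSupport gtx)
    (hgrx_cont : Continuous grx) (hgrx_supp : HasCompactSupport grx)
    (X : ℕ → ℕ → ℂ) (s r : ℝ → ℂ) (Y : ℕ → ℕ → ℂ)
    (A : ℝ → ℝ → ℂ) (Hker : ℕ → ℕ → ℕ → ℕ → ℂ)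
    (hs : ∀ t : ℝ, s t =
      ∑ n' ∈ Finset.range N, ∑ m' ∈ Finset.range M,
        X n' m' * gtx (t - n' * T) *
          Complex.exp (2 * Real.pi * Complex.I *
            (((m' : ℝ) - ((M : ℝ) - 1) / 2) * Δf * (t - n' * T) : ℝ)))
    (hr : ∀ t : ℝ, r t =
      ∑ p ∈ Finset.range P, ∑ i ∈ Finset.range L,
        h i * Complex.exp (2 * Real.pi * Complex.I * ((ν i * (t - p * Ts)) : ℝ)) *
          (Pfilt (p * Ts - τ i) : ℂ) * s (t - p * Ts))
    (hY : ∀ n m, Y n m =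
      ∫ t' : ℝ, (starRingEnd ℂ) (grx (t' - n * T)) * r t' *
        Complex.exp (-(2 * Real.pi * Complex.I) *
          ((((m : ℝ) - ((M : ℝ) - 1) / 2) * Δf * (t' - n * T)) : ℝ)))
    (hA : ∀ t f : ℝ, A t f =
      ∫ t' : ℝ, (starRingEnd ℂ) (grx (t' - t)) * gtx t' *
        Complex.exp (-(2 * Real.pi * Complex.I) * ((f * (t' - t)) : ℝ)))
    (hH : ∀ n m n' m', Hker n m n' m' =
      ∑ p ∈ Finset.range P, ∑ i ∈ Finset.range L,
        h i * (Pfilt (p * Ts - τ i) : ℂ) *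
          A (((n : ℝ) - n') * T - p * Ts) (((m : ℝ) - m') * Δf - ν i) *
          Complex.exp (Real.pi * Complex.I * ((((M : ℝ) - 1) * Δf *
            (p * Ts - ((n : ℝ) - n') * T)) : ℝ)) *
          Complex.exp (2 * Real.pi * Complex.I * (((m' : ℝ) * Δf *
            (((n : ℝ) - n') * T - p * Ts)) : ℝ)) *
          Complex.exp (2 * Real.pi * Complex.I * ((ν i * ((n : ℝ) * T - p * Ts)) : ℝ)))
    (n m : ℕ) (hn : n < N) (hm : m < M) :
    Y n m = ∑ n' ∈ Finset.range N, ∑ m' ∈ Finset.range M, Hker n m n' m' * X n' m' := by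
  rw [hY n m]
  simp only [hr, hs, Finset.mul_sum, Finset.sum_mul]
  have hint : ∀ p i n' m' : ℕ, MeasureTheory.Integrable (fun t' : ℝ =>
      (starRingEnd ℂ) (grx (t' - ↑n * T)) *
        (h i * cexp (2 * ↑Real.pi * Complex.I * ↑(ν i * (t' - ↑p * Ts))) *
            ↑(Pfilt (↑p * Ts - τ i)) *
          (X n' m' * gtx (t' - ↑p * Ts - ↑n' * T) *
            cexp (2 * ↑Real.pi * Complex.I *
              ↑((↑m' - (↑M - 1) / 2) * Δf * (t' - ↑p * Ts - ↑n' * T))))) *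
        cexp (-(2 * ↑Real.pi * Complex.I) * ↑((↑m - (↑M - 1) / 2) * Δf * (t' - ↑n * T)))) := by
    intro p i n' m'
    apply Continuous.integrable_of_hasCompactSupport
    · have hc : Continuous fun t' : ℝ => (starRingEnd ℂ) (grx (t' - ↑n * T)) :=
        Complex.continuous_conj.comp (hgrx_cont.comp (by fun_prop))
      fun_prop
    · have h1 : HasCompactSupport (fun t' : ℝ => (starRingEnd ℂ) (grx (t' - ↑n * T))) := by
        have h2 := hgrx_supp.comp_homeomorph (Homeomorph.subRight ((n : ℝ) * T))
        exact h2.comp_left (map_zero _)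
      exact (h1.mul_right).mul_right
  have step : (∫ t' : ℝ, ∑ p ∈ Finset.range P, ∑ i ∈ Finset.range L,
      ∑ n' ∈ Finset.range N, ∑ m' ∈ Finset.range M,
      (starRingEnd ℂ) (grx (t' - ↑n * T)) *
        (h i * cexp (2 * ↑Real.pi * Complex.I * ↑(ν i * (t' - ↑p * Ts))) *
            ↑(Pfilt (↑p * Ts - τ i)) *
          (X n' m' * gtx (t' - ↑p * Ts - ↑n' * T) *
            cexp (2 * ↑Real.pi * Complex.I *
              ↑((↑m' - (↑M - 1) / 2) * Δf * (t' - ↑p * Ts - ↑n' * T))))) *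
        cexp (-(2 * ↑Real.pi * Complex.I) * ↑((↑m - (↑M - 1) / 2) * Δf * (t' - ↑n * T))))
      = ∑ p ∈ Finset.range P, ∑ i ∈ Finset.range L, ∑ n' ∈ Finset.range N,
          ∑ m' ∈ Finset.range M, ∫ t' : ℝ,
      (starRingEnd ℂ) (grx (t' - ↑n * T)) *
        (h i * cexp (2 * ↑Real.pi * Complex.I * ↑(ν i * (t' - ↑p * Ts))) *
            ↑(Pfilt (↑p * Ts - τ i)) *
          (X n' m' * gtx (t' - ↑p * Ts - ↑n' * T) *
            cexp (2 * ↑Real.pi * Complex.I *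
              ↑((↑m' - (↑M - 1) / 2) * Δf * (t' - ↑p * Ts - ↑n' * T))))) *
        cexp (-(2 * ↑Real.pi * Complex.I) * ↑((↑m - (↑M - 1) / 2) * Δf * (t' - ↑n * T))) :=
    integral_sum4 _ hint
  refine step.trans ?_
  refine (sum4_comm _ _ _ _ _).trans ?_
  refine Finset.sum_congr rfl fun n' _ => Finset.sum_congr rfl fun m' _ => ?_
  rw [hH, Finset.sum_mul]
  refine Finset.sum_congr rfl fun p _ => ?_
  rw [Finset.sum_mul]
  refine Finset.sum_congr rfl fun i _ => ?_
  have tr := MeasureTheory.integral_add_right_eq_self (μ := volume)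
    (fun t' : ℝ =>
      (starRingEnd ℂ) (grx (t' - ↑n * T)) *
        (h i * cexp (2 * ↑Real.pi * Complex.I * ↑(ν i * (t' - ↑p * Ts))) *
            ↑(Pfilt (↑p * Ts - τ i)) *
          (X n' m' * gtx (t' - ↑p * Ts - ↑n' * T) *
            cexp (2 * ↑Real.pi * Complex.I *
              ↑((↑m' - (↑M - 1) / 2) * Δf * (t' - ↑p * Ts - ↑n' * T))))) *
        cexp (-(2 * ↑Real.pi * Complex.I) * ↑((↑m - (↑M - 1) / 2) * Δf * (t' - ↑n * T))))
    ((p : ℝ) * Ts + (n' : ℝ) * T)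
  rw [← tr]
  have hfun : (fun u : ℝ => (fun t' : ℝ =>
      (starRingEnd ℂ) (grx (t' - ↑n * T)) *
        (h i * cexp (2 * ↑Real.pi * Complex.I * ↑(ν i * (t' - ↑p * Ts))) *
            ↑(Pfilt (↑p * Ts - τ i)) *
          (X n' m' * gtx (t' - ↑p * Ts - ↑n' * T) *
            cexp (2 * ↑Real.pi * Complex.I *
              ↑((↑m' - (↑M - 1) / 2) * Δf * (t' - ↑p * Ts - ↑n' * T))))) *
        cexp (-(2 * ↑Real.pi * Complex.I) * ↑((↑m - (↑M - 1) / 2) * Δf * (t' - ↑n * T))))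
      (u + ((p : ℝ) * Ts + (n' : ℝ) * T)))
      = fun u : ℝ =>
        (h i * ↑(Pfilt (↑p * Ts - τ i)) *
            cexp (↑Real.pi * Complex.I * ↑((↑M - 1) * Δf * (↑p * Ts - (↑n - ↑n') * T))) *
            cexp (2 * ↑Real.pi * Complex.I * ↑(↑m' * Δf * ((↑n - ↑n') * T - ↑p * Ts))) *
            cexp (2 * ↑Real.pi * Complex.I * ↑(ν i * (↑n * T - ↑p * Ts))) * X n' m') *
          ((starRingEnd ℂ) (grx (u - ((↑n - ↑n') * T - ↑p * Ts))) * gtx u *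
            cexp (-(2 * ↑Real.pi * Complex.I) *
              ↑(((↑m - ↑m') * Δf - ν i) * (u - ((↑n - ↑n') * T - ↑p * Ts))))) := by
    funext u
    have ea : u + ((p : ℝ) * Ts + (n' : ℝ) * T) - ↑n * T
        = u - (((n : ℝ) - ↑n') * T - ↑p * Ts) := by ring
    have eb : u + ((p : ℝ) * Ts + (n' : ℝ) * T) - ↑p * Ts - ↑n' * T = u := by ring
    simp only [ea, eb]
    exact exp_shuffle _ _ _ _ _ _ _ _ _ _ _ _ (by push_cast; ring)
  rw [hfun, MeasureTheory.integral_const_mul, ← hA]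
  ring
end

section
/- The mutual information function of the consistent-Gaussian LLR model, I(σ) = 2 − 2·E[log₂(1 + e^{−2L})] where L ~ N(σ²/√2·√2, σ²) conditioned on x = 1/√2 (i.e., L ~ N(σ², σ²) after scaling), is continuous and strictly monotonically increasing in σ on (0, ∞), with lim_{σ→0} I(σ) = 0 and lim_{σ→∞} I(σ) = 2. -/
open Filter Set

/-- A priori mutual information of the consistent-Gaussian LLR model for
Gray-mapped QPSK (two BPSK components):
`I(σ) = 2 − 2·E[log₂(1 + e^{−2L})]` with `L ~ N(σ², σ²)` (the conditional
LLR distribution given `x = 1/√2`). -/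
noncomputable def exitMI (σ : ℝ) : ℝ :=
  2 - 2 * ∫ l : ℝ,
    (1 / (Real.sqrt (2 * Real.pi) * σ)) * Real.exp (-(l - σ^2)^2 / (2 * σ^2)) *
      Real.logb 2 (1 + Real.exp (-2 * l))

/-!
With `Z` standard normal and `L = σ² + σZ`, `exitMI σ = 2 - 2 J(σ)` for `σ > 0`, where
`J(σ) = E[g(L)]` (`llrEntropy`) and `g(l) = log₂(1 + e^{-2l})` (`llrLoss`). Differentiating under
the integral gives `J'(σ) = E[g'(L)(2σ + Z)]`. The reflection `Z ↦ -2σ - Z` sends `L` to `-L` and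
multiplies the Gaussian density by `e^{-2L}`; since `e^{-2l} g'(-l) = g'(l)` (consistency of the
LLR), averaging the two expressions collapses the derivative to `J'(σ) = σ E[g'(L)] < 0`. The limits
are `J(0) = g(0) = 1` by continuity and `J(σ) → 0` by dominated convergence, as `g(L) → 0`.
-/
open MeasureTheory ProbabilityTheory Real Topology
open scoped NNReal

namespace ProbabilityTheory

lemma integrable_gaussianReal_iff {μ : ℝ} {v : ℝ≥0} (hv : v ≠ 0) {f : ℝ → ℝ} :
    Integrable f (gaussianReal μ v) ↔ Integrable (fun x ↦ gaussianPDFReal μ v x * f x) := by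
  rw [gaussianReal_of_var_ne_zero _ hv, integrable_withDensity_iff_integrable_smul'
    (measurable_gaussianPDF μ v) (ae_of_all _ fun _ ↦ gaussianPDF_lt_top)]
  simp

lemma integrable_abs_gaussianReal (μ : ℝ) (v : ℝ≥0) :
    Integrable (fun x ↦ |x|) (gaussianReal μ v) :=
  ((memLp_id_gaussianReal 1).integrable le_rfl).abs

lemma integrable_sq_gaussianReal (μ : ℝ) (v : ℝ≥0) :
    Integrable (fun x ↦ x ^ 2) (gaussianReal μ v) :=
  (memLp_id_gaussianReal 2).integrable_sq

lemma integral_gaussianReal_eq_integral_add_mul (m s : ℝ) {f : ℝ → ℝ} (hf : Measurable f) :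
    ∫ x, f x ∂gaussianReal m (.mk (s ^ 2) (sq_nonneg s))
      = ∫ t, f (m + s * t) ∂gaussianReal 0 1 := by
  have hmap : (gaussianReal 0 1).map (fun t ↦ m + s * t)
      = gaussianReal m (.mk (s ^ 2) (sq_nonneg s)) := by
    rw [show (fun t ↦ m + s * t) = (m + ·) ∘ (s * ·) from rfl,
      ← Measure.map_map (measurable_const_add m) (measurable_const_mul s),
      gaussianReal_map_const_mul, gaussianReal_map_const_add]
    simp
  rw [← hmap, integral_map (by fun_prop) hf.aestronglyMeasurable]

lemma gaussianPDFReal_neg_sub (s t : ℝ) :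
    gaussianPDFReal 0 1 (-2 * s - t) = exp (-2 * (s ^ 2 + s * t)) * gaussianPDFReal 0 1 t := by
  simp only [gaussianPDFReal, NNReal.coe_one, mul_one, sub_zero]
  rw [mul_left_comm, ← exp_add]
  ring_nf

end ProbabilityTheory

noncomputable def llrLoss (l : ℝ) : ℝ := logb 2 (1 + exp (-2 * l))

noncomputable def llrLossDeriv (l : ℝ) : ℝ := -(2 / log 2) / (1 + exp (2 * l))

lemma hasDerivAt_llrLoss (l : ℝ) : HasDerivAt llrLoss (llrLossDeriv l) l := by
  have h : HasDerivAt (fun x ↦ 1 + exp (-2 * x)) (exp (-2 * l) * -2) l := by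
    simpa using (((hasDerivAt_id l).const_mul (-2)).exp.const_add 1)
  refine ((h.log (by positivity)).div_const (log 2)).congr_deriv ?_
  rw [llrLossDeriv, show exp (2 * l) = (exp (-2 * l))⁻¹ by rw [← exp_neg]; ring_nf]
  field_simp
  ring

@[fun_prop]
lemma continuous_llrLoss : Continuous llrLoss :=
  continuous_iff_continuousAt.2 fun l ↦ (hasDerivAt_llrLoss l).continuousAt

@[fun_prop]
lemma continuous_llrLossDeriv : Continuous llrLossDeriv :=
  continuous_const.div (by fun_prop) fun _ ↦ by positivity

lemma llrLoss_zero : llrLoss 0 = 1 := by norm_num [llrLoss]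

lemma llrLoss_nonneg (l : ℝ) : 0 ≤ llrLoss l :=
  logb_nonneg one_lt_two (by linarith [exp_pos (-2 * l)])

lemma antitone_llrLoss : Antitone llrLoss := fun a b hab ↦
  logb_le_logb_of_le one_lt_two (by positivity)
    (by linarith [exp_le_exp.2 (by linarith : -2 * b ≤ -2 * a)])

lemma llrLoss_neg (l : ℝ) : llrLoss (-l) = llrLoss l + 2 * l / log 2 := by
  have h : 1 + exp (-2 * -l) = exp (2 * l) * (1 + exp (-2 * l)) := by
    rw [mul_add, mul_one, ← exp_add, show 2 * l + -2 * l = 0 by ring, exp_zero]; ring_nf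
  rw [llrLoss, llrLoss, h, logb, log_mul (exp_pos _).ne' (by positivity), log_exp, logb]
  ring

lemma llrLoss_le (l : ℝ) : llrLoss l ≤ 1 + 2 / log 2 * |l| := by
  have hc : 0 ≤ 2 / log 2 * |l| := by positivity
  rcases le_total 0 l with hl | hl
  · linarith [antitone_llrLoss hl, llrLoss_zero]
  · have := antitone_llrLoss (neg_nonneg.2 hl)
    rw [← neg_neg l, llrLoss_neg, abs_neg, abs_of_nonneg (neg_nonneg.2 hl)]
    linarith [llrLoss_zero, show 2 * -l / log 2 = 2 / log 2 * -l by ring]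

lemma tendsto_llrLoss_atTop : Tendsto llrLoss atTop (𝓝 0) := by
  have h : Tendsto (fun l : ℝ ↦ 1 + exp (-2 * l)) atTop (𝓝 1) := by
    simpa using (tendsto_exp_atBot.comp
      (tendsto_id.const_mul_atTop_of_neg (by norm_num : (-2 : ℝ) < 0))).const_add 1
  have h' := (continuousAt_logb (b := 2) one_ne_zero).tendsto.comp h
  rwa [logb_one] at h'

lemma llrLossDeriv_neg (l : ℝ) : llrLossDeriv l < 0 :=
  div_neg_of_neg_of_pos (neg_neg_of_pos (by positivity)) (by positivity)

lemma abs_llrLossDeriv_le (l : ℝ) : |llrLossDeriv l| ≤ 2 / log 2 := by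
  rw [llrLossDeriv, abs_div, abs_neg, abs_of_pos (by positivity : 0 < 2 / log 2),
    abs_of_pos (by positivity : 0 < 1 + exp (2 * l))]
  exact div_le_self (by positivity) (by linarith [exp_pos (2 * l)])

lemma exp_mul_llrLossDeriv_neg (l : ℝ) : exp (-2 * l) * llrLossDeriv (-l) = llrLossDeriv l := by
  rw [llrLossDeriv, llrLossDeriv, show exp (-2 * l) = (exp (2 * l))⁻¹ by rw [← exp_neg]; ring_nf,
    show 2 * -l = -(2 * l) by ring, exp_neg]
  field_simp
  ring

noncomputable def llrEntropy (σ : ℝ) : ℝ := ∫ t, llrLoss (σ ^ 2 + σ * t) ∂gaussianReal 0 1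

lemma exitMI_eq_two_sub_llrEntropy {σ : ℝ} (hσ : 0 < σ) : exitMI σ = 2 - 2 * llrEntropy σ := by
  have hv : (NNReal.mk (σ ^ 2) (sq_nonneg σ)) ≠ 0 := by
    rw [← NNReal.coe_ne_zero]; exact (pow_pos hσ 2).ne'
  have hpdf : ∀ l, 1 / (√(2 * π) * σ) * exp (-(l - σ ^ 2) ^ 2 / (2 * σ ^ 2))
      = gaussianPDFReal (σ ^ 2) (.mk (σ ^ 2) (sq_nonneg σ)) l := by
    intro l
    rw [gaussianPDFReal, NNReal.coe_mk, sqrt_mul' _ (sq_nonneg σ), sqrt_sq hσ.le, one_div]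
  rw [exitMI, llrEntropy, ← integral_gaussianReal_eq_integral_add_mul _ _
    continuous_llrLoss.measurable, integral_gaussianReal_eq_integral_smul hv]
  simp only [hpdf, smul_eq_mul, llrLoss]

lemma integrable_llrLoss_comp (σ : ℝ) :
    Integrable (fun t ↦ llrLoss (σ ^ 2 + σ * t)) (gaussianReal 0 1) := by
  refine (((integrable_const (1 + 2 / log 2 * σ ^ 2)).add
    ((integrable_abs_gaussianReal 0 1).const_mul (2 / log 2 * |σ|))).mono'
    (by fun_prop : Continuous _).aestronglyMeasurable (ae_of_all _ fun t ↦ ?_))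
  have habs : |σ ^ 2 + σ * t| ≤ σ ^ 2 + |σ| * |t| := by
    have := abs_add_le (σ ^ 2) (σ * t)
    rwa [abs_mul, abs_of_nonneg (sq_nonneg σ)] at this
  rw [norm_of_nonneg (llrLoss_nonneg _), Pi.add_apply]
  have := mul_le_mul_of_nonneg_left habs (by positivity : (0 : ℝ) ≤ 2 / log 2)
  linarith [llrLoss_le (σ ^ 2 + σ * t)]

lemma integral_llrLossDeriv_mul_eq (σ : ℝ)
    (hint : Integrable (fun t ↦ llrLossDeriv (σ ^ 2 + σ * t) * (2 * σ + t)) (gaussianReal 0 1)) :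
    ∫ t, llrLossDeriv (σ ^ 2 + σ * t) * (2 * σ + t) ∂gaussianReal 0 1
      = σ * ∫ t, llrLossDeriv (σ ^ 2 + σ * t) ∂gaussianReal 0 1 := by
  set H : ℝ → ℝ := fun t ↦ gaussianPDFReal 0 1 t * (llrLossDeriv (σ ^ 2 + σ * t) * (2 * σ + t))
  have hH : Integrable H := (integrable_gaussianReal_iff one_ne_zero).1 hint
  have hpair (t : ℝ) : H t + H (-2 * σ - t)
      = 2 * σ * (gaussianPDFReal 0 1 t * llrLossDeriv (σ ^ 2 + σ * t)) := by
    simp only [H, gaussianPDFReal_neg_sub, show σ ^ 2 + σ * (-2 * σ - t) = -(σ ^ 2 + σ * t) by ring,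
      ← exp_mul_llrLossDeriv_neg (σ ^ 2 + σ * t)]
    ring
  simp only [integral_gaussianReal_eq_integral_smul one_ne_zero, smul_eq_mul]
  calc ∫ t, H t = (∫ t, (H t + H (-2 * σ - t))) / 2 := by
        rw [integral_add hH (hH.comp_sub_left _), integral_sub_left_eq_self H volume]; ring
    _ = _ := by simp_rw [hpair]; rw [integral_const_mul]; ring

lemma integral_llrLossDeriv_neg (σ : ℝ) :
    ∫ t, llrLossDeriv (σ ^ 2 + σ * t) ∂gaussianReal 0 1 < 0 := by
  have hint : Integrable (fun t ↦ llrLossDeriv (σ ^ 2 + σ * t)) (gaussianReal 0 1) :=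
    .of_bound (by fun_prop : Continuous _).aestronglyMeasurable _
      (ae_of_all _ fun t ↦ abs_llrLossDeriv_le _)
  rw [← neg_pos, ← integral_neg, integral_pos_iff_support_of_nonneg
    (fun t ↦ (neg_pos.2 (llrLossDeriv_neg _)).le) hint.neg]
  simp [Function.support, (llrLossDeriv_neg _).ne]

lemma hasDerivAt_llrEntropy (σ₀ : ℝ) :
    HasDerivAt llrEntropy (σ₀ * ∫ t, llrLossDeriv (σ₀ ^ 2 + σ₀ * t) ∂gaussianReal 0 1) σ₀ := by
  have hF (t σ : ℝ) : HasDerivAt (fun σ ↦ llrLoss (σ ^ 2 + σ * t))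
      (llrLossDeriv (σ ^ 2 + σ * t) * (2 * σ + t)) σ := by
    have : HasDerivAt (fun σ : ℝ ↦ σ ^ 2 + σ * t) (2 * σ + t) σ :=
      ((hasDerivAt_pow 2 σ).fun_add ((hasDerivAt_id' σ).mul_const t)).congr_deriv (by norm_num)
    exact (hasDerivAt_llrLoss _).comp σ this
  have hbound : ∀ t, ∀ σ ∈ Metric.ball σ₀ 1,
      ‖llrLossDeriv (σ ^ 2 + σ * t) * (2 * σ + t)‖ ≤ 2 / log 2 * (2 * (|σ₀| + 1) + |t|) := by
    intro t σ hσ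
    have hσ' : |σ| ≤ |σ₀| + 1 := by
      have := abs_sub_abs_le_abs_sub σ σ₀
      rw [Metric.mem_ball, dist_eq] at hσ; linarith
    have hlin : |2 * σ + t| ≤ 2 * (|σ₀| + 1) + |t| := by
      have := abs_add_le (2 * σ) t
      rw [abs_mul, abs_two] at this; linarith
    rw [norm_mul, norm_eq_abs, norm_eq_abs]
    exact mul_le_mul (abs_llrLossDeriv_le _) hlin (abs_nonneg _) (by positivity)
  obtain ⟨hint, hderiv⟩ := hasDerivAt_integral_of_dominated_loc_of_deriv_le
    (Metric.ball_mem_nhds σ₀ one_pos)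
    (Eventually.of_forall fun σ ↦ (by fun_prop : Continuous _).aestronglyMeasurable)
    (integrable_llrLoss_comp σ₀)
    (by fun_prop : Continuous _).aestronglyMeasurable
    (ae_of_all _ hbound)
    (((integrable_const _).add (integrable_abs_gaussianReal 0 1)).const_mul _)
    (ae_of_all _ fun t σ _ ↦ hF t σ)
  rwa [← integral_llrLossDeriv_mul_eq σ₀ hint]

lemma continuous_llrEntropy : Continuous llrEntropy :=
  continuous_iff_continuousAt.2 fun σ ↦ (hasDerivAt_llrEntropy σ).continuousAt

lemma llrEntropy_zero : llrEntropy 0 = 1 := by simp [llrEntropy, llrLoss_zero]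

lemma strictAntiOn_llrEntropy : StrictAntiOn llrEntropy (Ioi 0) := by
  refine strictAntiOn_of_deriv_neg (convex_Ioi 0) continuous_llrEntropy.continuousOn fun σ hσ ↦ ?_
  rw [interior_Ioi] at hσ
  rw [(hasDerivAt_llrEntropy σ).deriv]
  exact mul_neg_of_pos_of_neg hσ (integral_llrLossDeriv_neg σ)

lemma tendsto_llrEntropy_atTop : Tendsto llrEntropy atTop (𝓝 0) := by
  have hlim (t : ℝ) : Tendsto (fun σ ↦ llrLoss (σ ^ 2 + σ * t)) atTop (𝓝 0) := by
    refine tendsto_llrLoss_atTop.comp ?_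
    exact (tendsto_id.atTop_mul_atTop₀ (tendsto_atTop_add_const_right _ t tendsto_id)).congr
      fun σ ↦ by simp only [id_eq]; ring
  have hbound (σ t : ℝ) : ‖llrLoss (σ ^ 2 + σ * t)‖ ≤ 1 + 2 / log 2 / 4 * t ^ 2 := by
    have hmin : -(t ^ 2 / 4) ≤ σ ^ 2 + σ * t := by nlinarith [sq_nonneg (σ + t / 2)]
    have := llrLoss_le (-(t ^ 2 / 4))
    rw [abs_neg, abs_of_nonneg (by positivity)] at this
    rw [norm_of_nonneg (llrLoss_nonneg _)]
    linarith [antitone_llrLoss hmin]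
  have h := tendsto_integral_filter_of_dominated_convergence _
    (Eventually.of_forall fun σ ↦ (by fun_prop : Continuous _).aestronglyMeasurable)
    (Eventually.of_forall fun σ ↦ ae_of_all _ (hbound σ))
    ((integrable_const _).add ((integrable_sq_gaussianReal 0 1).const_mul _))
    (ae_of_all _ hlim)
  rwa [integral_zero] at h

/-- The EXIT-chart mutual information function is continuous and strictly
increasing on `(0, ∞)`, with limit `0` as `σ → 0⁺` and limit `2` (bits per QPSK
symbol) as `σ → ∞`. -/
theorem exitMI_monotone_limits :
    ContinuousOn exitMI (Set.Ioi (0 : ℝ)) ∧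
    StrictMonoOn exitMI (Set.Ioi (0 : ℝ)) ∧
    Tendsto exitMI (nhdsWithin 0 (Set.Ioi (0 : ℝ))) (nhds 0) ∧
    Tendsto exitMI atTop (nhds 2) := by
  have hEq : EqOn exitMI (fun σ ↦ 2 - 2 * llrEntropy σ) (Ioi 0) := fun σ hσ ↦
    exitMI_eq_two_sub_llrEntropy hσ
  have hcont : Continuous fun σ ↦ 2 - 2 * llrEntropy σ :=
    continuous_const.sub (continuous_llrEntropy.const_mul 2)
  refine ⟨hcont.continuousOn.congr hEq, fun a ha b hb hab ↦ ?_, ?_, ?_⟩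
  · rw [hEq ha, hEq hb]
    linarith [strictAntiOn_llrEntropy ha hb hab]
  · have h := (hcont.tendsto 0).mono_left (nhdsWithin_le_nhds (s := Ioi 0))
    rw [llrEntropy_zero, mul_one, sub_self] at h
    exact h.congr' (eventuallyEq_nhdsWithin_of_eqOn hEq).symm
  · have h := (tendsto_llrEntropy_atTop.const_mul 2).const_sub 2
    rw [mul_zero, sub_zero] at h
    exact h.congr' (eventually_gt_atTop 0 |>.mono fun σ hσ ↦ (hEq hσ).symm)
end
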